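/- arXiv:2211.08470 — 2 statements merged into one kernel-verified Lean document; each statement's English description precedes it below -/
import Mathlib

section
/- Let K be a p-adic field with ring of integers O_K and uniformizer π, and let e ∈ O_K. Let M be a finite free O_K-module and Θ an O_K-linear endomorphism of M such that Θ^p − e^{p−1}·Θ is nilpotent on M/πM. Then the products P_n := ∏_{i=0}^{n−1} (Θ − i·e·id_M) converge to 0 in End_{O_K}(M) for the p-adic topology; that is, for every k ∈ ℕ there is N such that P_n ∈ p^k·End_{O_K}(M) for all n ≥ N. -/
/-!
Over `𝔽_p[Y]` one has `∏_{i<p} (X - (a + i)Y) = X^p - Y^(p-1) X`, since both sides are monic of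
degree `p` and the `(a + i)Y` are distinct roots of the right-hand side. Hence, over any ring, `p`
consecutive factors `Θ - (a + i)e` multiply to `Θ^p - e^(p-1) Θ` modulo `p`, and a block of `pm`
consecutive factors is `(Θ^p - e^(p-1) Θ)^m + p C`. The first term is divisible by `π` by the
nilpotence hypothesis and `π ∣ p`, so every product of `j` such blocks is divisible by `π^j`.
Finally `p = u π^E` with `u` a unit, so `π^(kE)` is divisible by `p^k`.
-/

open Polynomial Finset

namespace Polynomial

variable {R S : Type*} [CommRing R] [CommRing S]

noncomputable def shiftedPochhammer (e : R) (a n : ℕ) : R[X] :=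
  ∏ i ∈ range n, (X - C (((a + i : ℕ) : R) * e))

theorem shiftedPochhammer_add (e : R) (a n₁ n₂ : ℕ) :
    shiftedPochhammer e a (n₁ + n₂) =
      shiftedPochhammer e a n₁ * shiftedPochhammer e (a + n₁) n₂ := by
  simp only [shiftedPochhammer, prod_range_add, add_assoc]

theorem shiftedPochhammer_zero_succ (e : R) (n : ℕ) :
    shiftedPochhammer e 0 (n + 1) = shiftedPochhammer e 0 n * (X - C ((n : R) * e)) := by
  simp [shiftedPochhammer, prod_range_succ]

theorem map_shiftedPochhammer (f : R →+* S) (e : R) (a n : ℕ) :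
    (shiftedPochhammer e a n).map f = shiftedPochhammer (f e) a n := by
  simp [shiftedPochhammer, Polynomial.map_prod]

theorem shiftedPochhammer_prime_of_charP [IsDomain R] (p : ℕ) [Fact p.Prime] [CharP R p]
    (c : R) (a : ℕ) : shiftedPochhammer c a p = X ^ p - C (c ^ (p - 1)) * X := by
  have hp := (Fact.out : p.Prime)
  rcases eq_or_ne c 0 with rfl | hc
  · simp [shiftedPochhammer, zero_pow (Nat.sub_ne_zero_of_lt hp.one_lt)]
  have hdeg : (X ^ p - C (c ^ (p - 1)) * X : R[X]).natDegree = p := by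
    rw [natDegree_sub_eq_left_of_natDegree_lt, natDegree_X_pow]
    rw [natDegree_C_mul_X _ (pow_ne_zero _ hc), natDegree_X_pow]
    exact hp.one_lt
  have hmonic : (X ^ p - C (c ^ (p - 1)) * X : R[X]).Monic :=
    monic_X_pow_sub (by compute_degree!; exact hp.one_lt)
  set s := (range p).val.map fun i => ((a + i : ℕ) : R) * c
  have hs : shiftedPochhammer c a p = (s.map fun x => X - C x).prod := by
    rw [Multiset.map_map, prod_map_val]; rfl
  have hnodup : s.Nodup := by
    refine (range p).nodup.map_on fun i hi j hj hij => ?_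
    have := (CharP.natCast_eq_natCast R p).1 (mul_right_cancel₀ hc hij)
    exact (this.add_left_cancel' a).eq_of_lt_of_lt (mem_range.1 hi) (mem_range.1 hj)
  have hroots : s ≤ (X ^ p - C (c ^ (p - 1)) * X : R[X]).roots := by
    refine (Multiset.le_iff_subset hnodup).2 fun x hx => ?_
    obtain ⟨i, -, rfl⟩ := Multiset.mem_map.1 hx
    have hfrob : ((a + i : ℕ) : R) ^ p = (a + i : ℕ) := by
      simpa [frobenius_def] using map_natCast (frobenius R p) (a + i)
    have hcp : c ^ p = c ^ (p - 1) * c := by rw [← pow_succ, Nat.sub_add_cancel hp.one_lt.le]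
    rw [mem_roots hmonic.ne_zero, IsRoot, eval_sub, eval_mul, eval_pow, eval_X, eval_C, mul_pow,
      hfrob, hcp]
    ring
  refine (eq_of_monic_of_dvd_of_natDegree_le (hs ▸ monic_multiset_prod_of_monic _ _
    fun x _ => monic_X_sub_C x) hmonic ?_ ?_).symm
  · rw [hs]; exact (Multiset.prod_X_sub_C_dvd_iff_le_roots hmonic.ne_zero s).2 hroots
  · rw [hdeg, hs, natDegree_multiset_prod_X_sub_C_eq_card]
    simp [s]

theorem exists_shiftedPochhammer_prime_int_eq (p : ℕ) [Fact p.Prime] (a : ℕ) :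
    ∃ Q : ℤ[X][X], shiftedPochhammer (X : ℤ[X]) a p =
      X ^ p - C (X ^ (p - 1)) * X + C (C (p : ℤ)) * Q := by
  -- `ℤ[Y][X] → 𝔽_p[Y][X]` has kernel `(p)`, and the identity holds exactly in its target.
  let φ := mapRingHom (mapRingHom (Int.castRingHom (ZMod p)))
  have hker : RingHom.ker φ = Ideal.span {C (C (p : ℤ))} := by
    rw [ker_mapRingHom, ker_mapRingHom, ZMod.ker_intCastRingHom, Ideal.map_span, Ideal.map_span,
      Set.image_singleton, Set.image_singleton]
  have hmem : shiftedPochhammer (X : ℤ[X]) a p - (X ^ p - C (X ^ (p - 1)) * X) ∈ RingHom.ker φ := by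
    rw [RingHom.mem_ker, map_sub, coe_mapRingHom, map_shiftedPochhammer,
      shiftedPochhammer_prime_of_charP]
    simp
  rw [hker, Ideal.mem_span_singleton'] at hmem
  obtain ⟨Q, hQ⟩ := hmem
  exact ⟨Q, by linear_combination -hQ⟩

theorem exists_shiftedPochhammer_prime_eq (p : ℕ) [Fact p.Prime] (e : R) (a : ℕ) :
    ∃ Q : R[X], shiftedPochhammer e a p = X ^ p - C (e ^ (p - 1)) * X + C (p : R) * Q := by
  obtain ⟨Q, hQ⟩ := exists_shiftedPochhammer_prime_int_eq p a
  let f := eval₂RingHom (Int.castRingHom R) e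
  refine ⟨Q.map f, ?_⟩
  simpa [map_shiftedPochhammer, f] using congrArg (map f) hQ

section Algebra

variable {A : Type*} [Ring A] [Algebra R A]

theorem aeval_shiftedPochhammer_zero_eq (e : R) (θ : A) {P : ℕ → A} (h0 : P 0 = 1)
    (hsucc : ∀ n : ℕ, P (n + 1) = P n * (θ - ((n : R) * e) • 1)) (n : ℕ) :
    P n = aeval θ (shiftedPochhammer e 0 n) := by
  induction n with
  | zero => simp [h0, shiftedPochhammer]
  | succ n ih =>
    rw [hsucc, ih, shiftedPochhammer_zero_succ, map_mul, map_sub, aeval_X, aeval_C,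
      Algebra.algebraMap_eq_smul_one]

theorem exists_aeval_shiftedPochhammer_prime_mul_eq (p : ℕ) [Fact p.Prime] (e : R) (θ : A)
    (m a : ℕ) : ∃ B : A,
      aeval θ (shiftedPochhammer e a (p * m)) = (θ ^ p - e ^ (p - 1) • θ) ^ m + (p : R) • B := by
  induction m generalizing a with
  | zero => exact ⟨0, by simp [shiftedPochhammer]⟩
  | succ m ih =>
    obtain ⟨B, hB⟩ := ih a
    obtain ⟨Q, hQ⟩ := exists_shiftedPochhammer_prime_eq p e (a + p * m)
    set S := θ ^ p - e ^ (p - 1) • θ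
    have hS : aeval θ (shiftedPochhammer e (a + p * m) p) = S + (p : R) • aeval θ Q := by
      rw [hQ, map_add, map_sub, map_mul, map_mul, aeval_C, aeval_C, map_pow, aeval_X,
        ← Algebra.smul_def, ← Algebra.smul_def]
    refine ⟨S ^ m * aeval θ Q + B * S + (p : R) • (B * aeval θ Q), ?_⟩
    rw [mul_add_one, shiftedPochhammer_add, map_mul, hB, hS]
    simp only [mul_add, add_mul, smul_mul_assoc, mul_smul_comm, smul_add, smul_smul, pow_succ]
    abel

theorem exists_aeval_shiftedPochhammer_mul_eq_pow_smul (e : R) (θ : A) {c : R} {L : ℕ}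
    (h : ∀ a, ∃ B : A, aeval θ (shiftedPochhammer e a L) = c • B) (j a : ℕ) :
    ∃ B : A, aeval θ (shiftedPochhammer e a (j * L)) = c ^ j • B := by
  induction j generalizing a with
  | zero => exact ⟨1, by simp [shiftedPochhammer]⟩
  | succ j ih =>
    obtain ⟨B₁, hB₁⟩ := h a
    obtain ⟨B₂, hB₂⟩ := ih (a + L)
    refine ⟨B₁ * B₂, ?_⟩
    rw [add_one_mul, add_comm, shiftedPochhammer_add, map_mul, hB₁, hB₂, smul_mul_smul_comm,
      pow_succ']

theorem exists_aeval_shiftedPochhammer_eq_pow_smul_of_le (e : R) (θ : A) {c : R} {L : ℕ}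
    (h : ∀ a, ∃ B : A, aeval θ (shiftedPochhammer e a L) = c • B) {j n : ℕ} (hn : j * L ≤ n) :
    ∃ B : A, aeval θ (shiftedPochhammer e 0 n) = c ^ j • B := by
  obtain ⟨B, hB⟩ := exists_aeval_shiftedPochhammer_mul_eq_pow_smul e θ h j (n - j * L)
  refine ⟨aeval θ (shiftedPochhammer e 0 (n - j * L)) * B, ?_⟩
  rw [← Nat.sub_add_cancel hn, shiftedPochhammer_add, Nat.add_sub_cancel, zero_add, map_mul, hB,
    mul_smul_comm]

end Algebra

end Polynomial

theorem Module.End.exists_eq_smul_of_forall_exists_eq_smul {R M : Type*} [CommRing R]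
    [AddCommGroup M] [Module R M] [Module.Free R M] {c : R} {f : Module.End R M}
    (h : ∀ x, ∃ y, f x = c • y) : ∃ g : Module.End R M, f = c • g := by
  choose y hy using h
  let b := Module.Free.chooseBasis R M
  exact ⟨b.constr ℕ (y ∘ b), b.ext fun i => by simp [hy]⟩

theorem statement2_general (p : ℕ) [Fact p.Prime]
    (O : Type*) [CommRing O] [IsDomain O] [IsDiscreteValuationRing O] [CharZero O]
    [CharP (IsLocalRing.ResidueField O) p]
    (π : O) (hπ : Irreducible π) (e : O)
    (M : Type*) [AddCommGroup M] [Module O M] [Module.Free O M]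
    (Θ : Module.End O M)
    -- `Θ^p − e^(p−1)·Θ` is nilpotent on `M/πM`
    (hnil : ∃ m : ℕ, ∀ x : M, ∃ y : M, ((Θ ^ p - e ^ (p - 1) • Θ) ^ m) x = π • y)
    -- `P n = ∏_{i=0}^{n−1} (Θ − i·e·id)`
    (P : ℕ → Module.End O M) (hP0 : P 0 = 1)
    (hPs : ∀ n : ℕ, P (n + 1) = P n * (Θ - ((n : O) * e) • (1 : Module.End O M))) :
    ∀ k : ℕ, ∃ N : ℕ, ∀ n ≥ N, ∃ B : Module.End O M, P n = (p : O) ^ k • B := by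
  intro k
  obtain ⟨m, hm⟩ := hnil
  obtain ⟨B₀, hB₀⟩ := Module.End.exists_eq_smul_of_forall_exists_eq_smul hm
  obtain ⟨v, hv⟩ : π ∣ (p : O) := by
    rw [← Ideal.mem_span_singleton, ← hπ.maximalIdeal_eq, ← IsLocalRing.residue_eq_zero_iff,
      map_natCast, CharP.cast_eq_zero]
  have hblock : ∀ a, ∃ B, aeval Θ (shiftedPochhammer e a (p * m)) = π • B := fun a => by
    obtain ⟨C, hC⟩ := exists_aeval_shiftedPochhammer_prime_mul_eq p e Θ m a
    exact ⟨B₀ + v • C, by rw [hC, hB₀, hv, mul_smul, smul_add]⟩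
  obtain ⟨E, u, hpu⟩ := IsDiscreteValuationRing.eq_unit_mul_pow_irreducible
    (Nat.cast_ne_zero.2 (Fact.out : p.Prime).ne_zero) hπ
  refine ⟨k * E * (p * m), fun n hn => ?_⟩
  obtain ⟨B, hB⟩ := exists_aeval_shiftedPochhammer_eq_pow_smul_of_le e Θ hblock hn
  refine ⟨((u⁻¹ : Oˣ) : O) ^ k • B, ?_⟩
  rw [aeval_shiftedPochhammer_zero_eq e Θ hP0 hPs, hB, smul_smul, ← mul_pow, hpu, mul_comm k,
    pow_mul, mul_right_comm, Units.mul_inv, one_mul]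

/-- Let `K` be a `p`-adic field with ring of integers `O_K` and uniformizer
`π`, and let `e ∈ O_K`.  Let `M` be a finite free `O_K`-module and `Θ` an `O_K`-linear
endomorphism of `M` such that `Θ^p − e^(p−1)·Θ` is nilpotent on `M/πM`.  Then the products
`P n := ∏_{i=0}^{n−1} (Θ − i·e·id_M)` converge to `0` in `End_{O_K}(M)` for the `p`-adic
topology; that is, for every `k ∈ ℕ` there is `N` such that `P n ∈ p^k·End_{O_K}(M)` for all
`n ≥ N`. -/
theorem statement2 (p : ℕ) [Fact p.Prime]
    (O : Type*) [CommRing O] [IsDomain O] [IsDiscreteValuationRing O] [CharZero O]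
    [CharP (IsLocalRing.ResidueField O) p]
    [IsAdicComplete (IsLocalRing.maximalIdeal O) O]
    [PerfectRing (IsLocalRing.ResidueField O) p]
    (π : O) (hπ : Irreducible π) (e : O)
    (M : Type*) [AddCommGroup M] [Module O M] [Module.Finite O M] [Module.Free O M]
    (Θ : Module.End O M)
    -- `Θ^p − e^(p−1)·Θ` is nilpotent on `M/πM`
    (hnil : ∃ m : ℕ, ∀ x : M, ∃ y : M, ((Θ ^ p - e ^ (p - 1) • Θ) ^ m) x = π • y)
    -- `P n = ∏_{i=0}^{n−1} (Θ − i·e·id)`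
    (P : ℕ → Module.End O M) (hP0 : P 0 = 1)
    (hPs : ∀ n : ℕ, P (n + 1) = P n * (Θ - ((n : O) * e) • (1 : Module.End O M))) :
    ∀ k : ℕ, ∃ N : ℕ, ∀ n ≥ N, ∃ B : Module.End O M, P n = (p : O) ^ k • B :=
  statement2_general p O π hπ e M Θ hnil P hP0 hPs
end

section
/- Let K be a p-adic field with ring of integers O_K and uniformizer π, and let e ∈ O_K. Let V be a finite-dimensional K-vector space, Θ a K-linear endomorphism of V, and set Q := Θ^p − e^{p−1}·Θ. Then the following are equivalent: (i) Q acts topologically nilpotently on V, i.e. the powers Q^n tend to 0 in End_K(V) for the canonical topology of the finite-dimensional K-vector space End_K(V); (ii) there exists a Θ-stable O_K-lattice M⁰ ⊆ V (a finitely generated O_K-submodule with M⁰ ⊗_{O_K} K = V, satisfying Θ(M⁰) ⊆ M⁰) such that the induced endomorphism of M⁰/πM⁰ determined by Q is nilpotent. -/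
/-!
(ii) ⇒ (i): two lattices are commensurable, `π ^ a • L ≤ M⁰` and `π ^ b • M⁰ ≤ L`, so
`Q ^ (m * (a + b + k)) M⁰ ⊆ π ^ (a + b + k) • M⁰` forces `Q ^ n L ⊆ π ^ k • L` for large `n`; for
the lattice `L` spanned by a basis this is the statement about matrix entries.

(i) ⇒ (ii): for the lattice `L` spanned by a basis choose `b` with `π ^ b • Θ ^ i L ⊆ L` for
`i < p`, and `N > 0` with `Q ^ n L ⊆ π ^ (b + 1) • L` for `n ≥ N`. Then
`M⁰ = ∑_{n < N, i < p} Q ^ n Θ ^ i L` is a lattice, it is `Θ`-stable because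
`Θ ^ p = Q + e ^ (p - 1) • Θ` and `Q ^ N L ⊆ L`, and `Q ^ N M⁰ ⊆ π • M⁰`.
-/

open Filter Pointwise Submodule

theorem Module.End.mapsTo_pow {R M : Type*} [Semiring R] [AddCommMonoid M] [Module R M]
    {f : Module.End R M} {s : Set M} (h : Set.MapsTo f s s) (n : ℕ) :
    Set.MapsTo (f ^ n) s s := by
  rw [Module.End.coe_pow]
  exact h.iterate n

theorem Submodule.smul_mem_pointwise_smul_iff_of_ne_zero {R M : Type*} [CommRing R] [IsDomain R]
    [AddCommGroup M] [Module R M] [Module.IsTorsionFree R M] {c : R} (hc : c ≠ 0) {x : M}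
    {S : Submodule R M} : c • x ∈ c • S ↔ x ∈ S := by
  refine ⟨fun h => ?_, smul_mem_pointwise_smul x c S⟩
  obtain ⟨y, hy, hyx⟩ := (mem_smul_pointwise_iff_exists _ _ _).1 h
  rwa [← (IsRegular.of_ne_zero hc).smul_right_injective M hyx]

theorem IsDiscreteValuationRing.exists_pow_mul_eq_algebraMap {O K : Type*} [CommRing O]
    [IsDomain O] [IsDiscreteValuationRing O] [Field K] [Algebra O K] [IsFractionRing O K] {π : O}
    (hπ : Irreducible π) (c : K) : ∃ (s : ℕ) (r : O), algebraMap O K (π ^ s) * c = algebraMap O K r := by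
  obtain ⟨⟨x, y⟩, hxy⟩ := IsLocalization.surj (nonZeroDivisors O) c
  obtain ⟨s, u, hu⟩ :=
    IsDiscreteValuationRing.eq_unit_mul_pow_irreducible (nonZeroDivisors.coe_ne_zero y) hπ
  have hu' : algebraMap O K ↑u⁻¹ * algebraMap O K ↑u = 1 := by
    rw [← map_mul, Units.inv_mul, map_one]
  refine ⟨s, ↑u⁻¹ * x, ?_⟩
  simp only [hu, map_mul] at hxy
  rw [map_mul]
  linear_combination algebraMap O K ↑u⁻¹ * hxy - c * algebraMap O K (π ^ s) * hu'

section

variable {O K V : Type*} [CommRing O] [Field K] [Algebra O K]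
  [AddCommGroup V] [Module K V] [Module O V] [IsScalarTower O K V]

theorem Module.Basis.isLattice_span_range {ι : Type*} [Finite ι] (B : Module.Basis ι K V) :
    (span O (Set.range B)).IsLattice K where
  fg := fg_span (Set.finite_range B)
  span_eq_top := by rw [span_span_of_tower, B.span_eq]

section Endomorphism

variable {f : Module.End K V}

theorem forall_mem_span_apply_mem_smul {c : O} {s : Set V} {L : Submodule O V}
    (h : ∀ x ∈ s, f x ∈ c • L) : ∀ x ∈ span O s, f x ∈ c • L :=
  span_le (p := (c • L).comap (f.restrictScalars O)) |>.2 h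

theorem forall_toMatrix_eq_algebraMap_mul_iff [IsDomain O] [Module.IsTorsionFree O K] {ι : Type*}
    [Fintype ι] [DecidableEq ι] (B : Module.Basis ι K V) (c : O) :
    (∀ i j, ∃ y, LinearMap.toMatrix B B f i j = algebraMap O K (c * y)) ↔
      ∀ x ∈ span O (Set.range B), f x ∈ c • span O (Set.range B) := by
  constructor
  · intro h
    refine forall_mem_span_apply_mem_smul ?_
    rintro _ ⟨j, rfl⟩
    choose y hy using fun i => h i j
    rw [mem_smul_pointwise_iff_exists]
    refine ⟨∑ i, y i • B i, sum_mem fun i _ => smul_mem _ _ (subset_span ⟨i, rfl⟩), ?_⟩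
    calc c • ∑ i, y i • B i = ∑ i, algebraMap O K (c * y i) • B i := by
          simp only [Finset.smul_sum, algebraMap_smul, mul_smul]
      _ = f (B j) := by
          simp only [← hy, LinearMap.toMatrix_apply, B.sum_repr]
  · intro h i j
    obtain ⟨y, hy, hfy⟩ := (mem_smul_pointwise_iff_exists _ _ _).1 (h _ (subset_span ⟨j, rfl⟩))
    obtain ⟨r, hr⟩ := (B.mem_span_iff_repr_mem O y).1 hy i
    refine ⟨r, ?_⟩
    rw [LinearMap.toMatrix_apply, ← hfy, ← algebraMap_smul K c y, map_smul, Finsupp.smul_apply,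
      ← hr, smul_eq_mul, map_mul]

theorem pow_mul_apply_mem_pow_smul {M : Submodule O V} {c : O} {m : ℕ}
    (h : ∀ x ∈ M, (f ^ m) x ∈ c • M) (s : ℕ) : ∀ x ∈ M, (f ^ (m * s)) x ∈ c ^ s • M := by
  induction s with
  | zero => simp
  | succ s ih =>
    intro x hx
    obtain ⟨y, hy, hxy⟩ := (mem_smul_pointwise_iff_exists _ _ _).1 (h x hx)
    rw [Nat.mul_succ, pow_add f, Module.End.mul_apply, ← hxy, LinearMap.map_smul_of_tower,
      pow_succ', mul_smul]
    exact smul_mem_pointwise_smul _ _ _ (ih y hy)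

end Endomorphism

section Hull

variable (Θ Q : Module.End K V) (N p : ℕ) (L : Submodule O V)

def latticeHull : Submodule O V :=
  ⨆ (n : Fin N) (i : Fin p), L.map ((Q ^ (n : ℕ) * Θ ^ (i : ℕ)).restrictScalars O)

variable {Θ Q N p L}

theorem latticeHull_le_iff {P : Submodule O V} :
    latticeHull Θ Q N p L ≤ P ↔ ∀ n < N, ∀ i < p, ∀ x ∈ L, (Q ^ n * Θ ^ i) x ∈ P := by
  simp only [latticeHull, iSup_le_iff, Fin.forall_iff]
  exact forall₄_congr fun _ _ _ _ => map_le_iff_le_comap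

theorem apply_mem_latticeHull {n i : ℕ} (hn : n < N) (hi : i < p) {x : V} (hx : x ∈ L) :
    (Q ^ n * Θ ^ i) x ∈ latticeHull Θ Q N p L :=
  latticeHull_le_iff.1 le_rfl n hn i hi x hx

theorem le_latticeHull (hN : 0 < N) (hp : 0 < p) : L ≤ latticeHull Θ Q N p L := fun x hx => by
  simpa using apply_mem_latticeHull (Q := Q) (Θ := Θ) hN hp hx

theorem latticeHull_fg (hL : L.FG) : (latticeHull Θ Q N p L).FG :=
  fg_iSup _ fun _ => fg_iSup _ fun _ => hL.map _

theorem mapsTo_latticeHull (hp : 1 < p) {c : O} (hΘ : Θ ^ p = Q + algebraMap O K c • Θ)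
    (hQN : ∀ x ∈ L, (Q ^ N) x ∈ L) :
    Set.MapsTo Θ (latticeHull Θ Q N p L) (latticeHull Θ Q N p L) := by
  have hΘQ : Commute Θ Q := by
    rw [eq_sub_of_add_eq hΘ.symm]
    exact ((Commute.refl Θ).pow_right p).sub_right ((Commute.refl Θ).smul_right _)
  refine latticeHull_le_iff (P := (latticeHull Θ Q N p L).comap (Θ.restrictScalars O)).2
    fun n hn i hi x hx => ?_
  change Θ ((Q ^ n * Θ ^ i) x) ∈ latticeHull Θ Q N p L
  rw [← Module.End.mul_apply, ← mul_assoc, (hΘQ.pow_right n).eq, mul_assoc, ← pow_succ']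
  rcases (Nat.succ_le_of_lt hi).lt_or_eq with hi' | rfl
  · exact apply_mem_latticeHull hn hi' hx
  rw [hΘ, mul_add, mul_smul_comm, ← pow_succ, LinearMap.add_apply, LinearMap.smul_apply,
    algebraMap_smul]
  refine add_mem ?_ (smul_mem _ _ (by simpa using apply_mem_latticeHull hn hp hx))
  rcases (Nat.succ_le_of_lt hn).lt_or_eq with hn' | rfl
  · simpa using apply_mem_latticeHull (Θ := Θ) hn' (zero_lt_one.trans hp) hx
  · exact le_latticeHull (Nat.succ_pos n) (zero_lt_one.trans hp) (hQN x hx)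

theorem pow_apply_mem_smul_latticeHull [IsDomain O] [Module.IsTorsionFree O V] {π : O}
    (hπ : π ≠ 0) {b : ℕ} (hΘL : ∀ i < p, ∀ x ∈ L, π ^ b • (Θ ^ i) x ∈ L)
    (hQL : ∀ n ≥ N, ∀ x ∈ L, (Q ^ n) x ∈ π ^ (b + 1) • L) :
    ∀ x ∈ latticeHull Θ Q N p L, (Q ^ N) x ∈ π • latticeHull Θ Q N p L := by
  refine latticeHull_le_iff
    (P := (π • latticeHull Θ Q N p L).comap ((Q ^ N).restrictScalars O)).2
    fun n hn i hi x hx => ?_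
  change (Q ^ N) ((Q ^ n * Θ ^ i) x) ∈ π • latticeHull Θ Q N p L
  have hQx := hQL (N + n) (Nat.le_add_right N n) _ (hΘL i hi x hx)
  rw [pow_succ, mul_smul, LinearMap.map_smul_of_tower,
    smul_mem_pointwise_smul_iff_of_ne_zero (pow_ne_zero b hπ)] at hQx
  rw [← Module.End.mul_apply, ← mul_assoc, ← pow_add, Module.End.mul_apply]
  obtain ⟨y, hy, hyx⟩ := (mem_smul_pointwise_iff_exists _ _ _).1 hQx
  rw [← hyx]
  exact smul_mem_pointwise_smul _ _ _
    (le_latticeHull (Nat.zero_lt_of_lt hn) (Nat.zero_lt_of_lt hi) hy)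

end Hull

section DiscreteValuationRing

variable [IsDomain O] [IsDiscreteValuationRing O] [IsFractionRing O K] {π : O}

theorem Submodule.eventually_pow_smul_mem_of_mem_span (hπ : Irreducible π) {M : Submodule O V}
    {v : V} (hv : v ∈ span K (M : Set V)) : ∀ᶠ s in atTop, π ^ s • v ∈ M := by
  induction hv using Submodule.span_induction with
  | mem x hx => exact .of_forall fun s => M.smul_mem _ hx
  | zero => exact .of_forall fun s => by simp
  | add x y _ _ hx hy =>
    filter_upwards [hx, hy] with s hxs hys
    rw [smul_add]
    exact add_mem hxs hys
  | smul a x _ hx =>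
    obtain ⟨t, r, hr⟩ := IsDiscreteValuationRing.exists_pow_mul_eq_algebraMap hπ a
    obtain ⟨s₀, hs₀⟩ := eventually_atTop.1 hx
    refine eventually_atTop.2 ⟨s₀ + t, fun s hs => ?_⟩
    have hax : π ^ s • a • x = r • π ^ (s - t) • x := by
      rw [← Nat.sub_add_cancel (le_of_add_le_right hs), Nat.add_sub_cancel, pow_add, mul_smul,
        ← algebraMap_smul K (π ^ t) (a • x), smul_smul, hr, algebraMap_smul, smul_comm]
    rw [hax]
    exact M.smul_mem r (hs₀ _ (Nat.le_sub_of_add_le hs))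

theorem Submodule.FG.eventually_pow_smul_le (hπ : Irreducible π) {L M : Submodule O V}
    (hM : M.FG) (hL : span K (L : Set V) = ⊤) : ∀ᶠ s in atTop, π ^ s • M ≤ L := by
  obtain ⟨G, rfl⟩ := hM
  have hG : ∀ᶠ s in atTop, ∀ g ∈ G, π ^ s • g ∈ L := (eventually_all_finset G).2 fun g _ =>
    eventually_pow_smul_mem_of_mem_span (K := K) hπ (by simp [hL])
  filter_upwards [hG] with s hs
  rw [smul_span, span_le]
  rintro _ ⟨g, hg, rfl⟩
  exact hs g hg

theorem eventually_pow_apply_mem_pow_smul (hπ : Irreducible π) {f : Module.End K V}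
    {L M : Submodule O V} [L.IsLattice K] [M.IsLattice K] (hfM : Set.MapsTo f M M) {m : ℕ}
    (hm : ∀ x ∈ M, (f ^ m) x ∈ π • M) (k : ℕ) :
    ∀ᶠ n in atTop, ∀ x ∈ L, (f ^ n) x ∈ π ^ k • L := by
  have := Module.IsTorsionFree.trans_faithfulSMul O K V
  obtain ⟨a, ha⟩ :=
    ((IsLattice.fg (M := L)).eventually_pow_smul_le hπ (IsLattice.span_eq_top (M := M))).exists
  obtain ⟨b, hb⟩ :=
    ((IsLattice.fg (M := M)).eventually_pow_smul_le hπ (IsLattice.span_eq_top (M := L))).exists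
  filter_upwards [eventually_ge_atTop (m * (a + b + k))] with n hn x hx
  have hfx : (f ^ n) (π ^ a • x) ∈ π ^ (a + b + k) • M := by
    rw [← Nat.add_sub_cancel' hn, pow_add f, Module.End.mul_apply]
    refine pow_mul_apply_mem_pow_smul hm _ _ ?_
    exact Module.End.mapsTo_pow hfM _ (ha (smul_mem_pointwise_smul _ _ _ hx))
  obtain ⟨y, hy, hyx⟩ := (mem_smul_pointwise_iff_exists _ _ _).1 hfx
  have hπx : π ^ (a + b) • (f ^ n) x = π ^ b • (f ^ n) (π ^ a • x) := by
    rw [LinearMap.map_smul_of_tower, smul_smul, ← pow_add, add_comm a b]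
  rw [← smul_mem_pointwise_smul_iff_of_ne_zero (pow_ne_zero (a + b) hπ.ne_zero), smul_smul,
    ← pow_add, hπx, ← hyx, smul_comm]
  exact smul_mem_pointwise_smul _ _ _ (hb (smul_mem_pointwise_smul _ _ _ hy))

theorem exists_isLattice_mapsTo_pow_apply_mem_smul (hπ : Irreducible π)
    {Θ Q : Module.End K V} {p : ℕ} (hp : 1 < p) {c : O} (hΘ : Θ ^ p = Q + algebraMap O K c • Θ)
    {L : Submodule O V} [L.IsLattice K]
    (hQ : ∀ k, ∀ᶠ n in atTop, ∀ x ∈ L, (Q ^ n) x ∈ π ^ k • L) :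
    ∃ M : Submodule O V, M.IsLattice K ∧ Set.MapsTo Θ M M ∧ ∃ m, ∀ x ∈ M, (Q ^ m) x ∈ π • M := by
  have := Module.IsTorsionFree.trans_faithfulSMul O K V
  obtain ⟨b, hb⟩ := ((eventually_all_finset (Finset.range p)).2 fun i _ =>
    ((IsLattice.fg (M := L)).map ((Θ ^ i).restrictScalars O)).eventually_pow_smul_le hπ
      (IsLattice.span_eq_top (M := L))).exists
  have hΘL : ∀ i < p, ∀ x ∈ L, π ^ b • (Θ ^ i) x ∈ L := fun i hi x hx =>
    hb i (Finset.mem_range.2 hi) (smul_mem_pointwise_smul _ _ _ (mem_map_of_mem hx))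
  obtain ⟨N, hN⟩ := eventually_atTop.1 ((hQ (b + 1)).and (eventually_gt_atTop 0))
  have hQL : ∀ n ≥ N, ∀ x ∈ L, (Q ^ n) x ∈ π ^ (b + 1) • L := fun n hn => (hN n hn).1
  refine ⟨latticeHull Θ Q N p L, ?_, ?_, N, pow_apply_mem_smul_latticeHull hπ.ne_zero hΘL hQL⟩
  · exact IsLattice.of_le_of_isLattice_of_fg K
      (le_latticeHull (hN N le_rfl).2 (zero_lt_one.trans hp)) (latticeHull_fg IsLattice.fg)
  · exact mapsTo_latticeHull hp hΘ fun x hx => smul_le_self_of_tower _ _ (hQL N le_rfl x hx)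

end DiscreteValuationRing

end

theorem statement9_general (p : ℕ) [Fact p.Prime]
    (O : Type*) [CommRing O] [IsDomain O] [IsDiscreteValuationRing O]
    (K : Type*) [Field K] [Algebra O K] [IsFractionRing O K]
    (π : O) (hπ : Irreducible π) (e : O)
    (V : Type*) [AddCommGroup V] [Module K V] [FiniteDimensional K V]
    [Module O V] [IsScalarTower O K V]
    (Θ Q : Module.End K V)
    (hQ : Q = Θ ^ p - (algebraMap O K e) ^ (p - 1) • Θ) :
    -- (i) `Q` is topologically nilpotent on `V`
    (∀ (ι : Type) [Fintype ι] [DecidableEq ι] (B : Module.Basis ι K V) (k : ℕ),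
        ∃ N : ℕ, ∀ n ≥ N, ∀ i j : ι, ∃ y : O,
          LinearMap.toMatrix B B (Q ^ n) i j = algebraMap O K (π ^ k * y))
    ↔
    -- (ii) there is a `Θ`-stable `O_K`-lattice on which `Q` is nilpotent mod `π`
    (∃ M0 : Submodule O V, M0.FG ∧ Submodule.span K (M0 : Set V) = ⊤ ∧
        (∀ x ∈ M0, Θ x ∈ M0) ∧
        ∃ m : ℕ, ∀ x ∈ M0, ∃ y ∈ M0, (Q ^ m) x = π • y) := by
  have hΘ : Θ ^ p = Q + algebraMap O K (e ^ (p - 1)) • Θ := by rw [hQ, map_pow, sub_add_cancel]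
  have hmem : ∀ (M : Submodule O V) (v : V), (∃ y ∈ M, v = π • y) ↔ v ∈ π • M := fun M v => by
    simp only [mem_smul_pointwise_iff_exists, eq_comm]
  simp only [forall_toMatrix_eq_algebraMap_mul_iff, ← eventually_atTop, hmem]
  constructor
  · intro h
    let B := Module.finBasis K V
    have := B.isLattice_span_range (O := O)
    obtain ⟨M, hM, hΘM, m, hm⟩ :=
      exists_isLattice_mapsTo_pow_apply_mem_smul hπ (Fact.out : p.Prime).one_lt hΘ (h _ B)
    exact ⟨M, hM.fg, hM.span_eq_top, hΘM, m, hm⟩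
  · rintro ⟨M, hMfg, hMspan, hΘM, m, hm⟩ ι _ _ B k
    have : M.IsLattice K := ⟨hMfg, hMspan⟩
    have := B.isLattice_span_range (O := O)
    have hQM : Set.MapsTo Q M M := fun x hx => by
      rw [eq_sub_of_add_eq hΘ.symm, LinearMap.sub_apply, LinearMap.smul_apply, algebraMap_smul]
      exact sub_mem (Module.End.mapsTo_pow hΘM p hx) (smul_mem _ _ (hΘM x hx))
    exact eventually_pow_apply_mem_pow_smul hπ hQM hm k

/-- Let `K` be a `p`-adic field with ring of integers `O_K` and uniformizer
`π`, and let `e ∈ O_K`.  Let `V` be a finite-dimensional `K`-vector space, `Θ` a `K`-linear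
endomorphism of `V`, and set `Q := Θ^p − e^(p−1)·Θ`.  Then the following are equivalent:
(i) `Q` acts topologically nilpotently on `V`, i.e. the powers `Qⁿ` tend to `0` in
`End_K(V)` for the canonical topology of the finite-dimensional `K`-vector space `End_K(V)`
(expressed via matrix coordinates in any basis: for every `k` the entries eventually lie in
`π^k·O_K`); (ii) there exists a `Θ`-stable `O_K`-lattice `M⁰ ⊆ V` (a finitely generated
`O_K`-submodule with `M⁰ ⊗_{O_K} K = V`, satisfying `Θ(M⁰) ⊆ M⁰`) such that the induced
endomorphism of `M⁰/πM⁰` determined by `Q` is nilpotent. -/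
theorem statement9 (p : ℕ) [Fact p.Prime]
    (O : Type*) [CommRing O] [IsDomain O] [IsDiscreteValuationRing O] [CharZero O]
    [CharP (IsLocalRing.ResidueField O) p]
    [IsAdicComplete (IsLocalRing.maximalIdeal O) O]
    [PerfectRing (IsLocalRing.ResidueField O) p]
    (K : Type*) [Field K] [Algebra O K] [IsFractionRing O K]
    (π : O) (hπ : Irreducible π) (e : O)
    (V : Type*) [AddCommGroup V] [Module K V] [FiniteDimensional K V]
    [Module O V] [IsScalarTower O K V]
    (Θ Q : Module.End K V)
    (hQ : Q = Θ ^ p - (algebraMap O K e) ^ (p - 1) • Θ) :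
    -- (i) `Q` is topologically nilpotent on `V`
    (∀ (ι : Type) [Fintype ι] [DecidableEq ι] (B : Module.Basis ι K V) (k : ℕ),
        ∃ N : ℕ, ∀ n ≥ N, ∀ i j : ι, ∃ y : O,
          LinearMap.toMatrix B B (Q ^ n) i j = algebraMap O K (π ^ k * y))
    ↔
    -- (ii) there is a `Θ`-stable `O_K`-lattice on which `Q` is nilpotent mod `π`
    (∃ M0 : Submodule O V, M0.FG ∧ Submodule.span K (M0 : Set V) = ⊤ ∧
        (∀ x ∈ M0, Θ x ∈ M0) ∧
        ∃ m : ℕ, ∀ x ∈ M0, ∃ y ∈ M0, (Q ^ m) x = π • y) :=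
  statement9_general p O K π hπ e V Θ Q hQ
end
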